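/- arXiv:1210.3083 — 2 statements merged into one kernel-verified Lean document; each statement's English description precedes it below -/
import Mathlib

section
/- For all integers q ≥ r ≥ 2 and every integer m ≥ 0, ∑_{p=0}^{m} [p]_q^{-1} [m−p]_r^{-1} ≤ 6 (2r)^r [m]_r^{-1}. -/
/-- `br m = max m 1`, the bracket convention `[m]` from the paper, as a real number. -/
noncomputable def br (m : ℤ) : ℝ := max (m : ℝ) 1

/-- `brf m k = [m]_k = [m]·[m-1]⋯[m-k+1]`, the modified falling factorial. -/
noncomputable def brf (m : ℤ) (k : ℕ) : ℝ := ∏ i ∈ Finset.range k, br (m - i)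

/-!
One of `p`, `m - p` is at least `m / 2`, and whenever `2x ≥ m` one has `[m - i] ≤ 2r [x - i]`
factor by factor, hence `[x]_r⁻¹ ≤ (2r)^r [m]_r⁻¹`. Bounding the other factor by `[y]_2⁻¹`
(as `q ≥ r ≥ 2`), each term of the convolution is at most
`(2r)^r [m]_r⁻¹ ([p]_2⁻¹ + [m - p]_2⁻¹)`, and `∑_p [p]_2⁻¹ ≤ 3` by telescoping.
-/

open Finset

lemma one_le_br (m : ℤ) : 1 ≤ br m := le_max_right _ _

lemma br_natCast {n : ℕ} (hn : 1 ≤ n) : br n = n :=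
  max_eq_left (by exact_mod_cast hn)

lemma one_le_brf (m : ℤ) (k : ℕ) : 1 ≤ brf m k :=
  one_le_prod fun _ _ => one_le_br _

lemma brf_pos (m : ℤ) (k : ℕ) : 0 < brf m k := one_pos.trans_le (one_le_brf m k)

lemma inv_brf_nonneg (m : ℤ) (k : ℕ) : 0 ≤ (brf m k)⁻¹ := inv_nonneg.mpr (brf_pos m k).le

lemma brf_two (x : ℤ) : brf x 2 = br x * br (x - 1) := by
  simp [brf, prod_range_succ]

lemma brf_mono {r q : ℕ} (h : r ≤ q) (m : ℤ) : brf m r ≤ brf m q :=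
  prod_le_prod_of_subset_of_one_le (range_subset_range.mpr h)
    (fun _ _ => zero_le_one.trans (one_le_br _)) fun _ _ _ => one_le_br _

lemma inv_brf_anti {r q : ℕ} (h : r ≤ q) (m : ℤ) : (brf m q)⁻¹ ≤ (brf m r)⁻¹ :=
  inv_anti₀ (brf_pos _ _) (brf_mono h m)

lemma br_sub_le_mul_br_sub {m x : ℤ} {r i : ℕ} (hi : i < r) (hx : m ≤ 2 * x) :
    br (m - i) ≤ 2 * r * br (x - i) := by
  have hr : (1 : ℝ) ≤ r := by exact_mod_cast hi.trans_le' (Nat.zero_le i)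
  have h2r : (2 * r : ℝ) ≤ 2 * r * br (x - i) :=
    le_mul_of_one_le_right (by positivity) (one_le_br _)
  refine max_le ?_ (by linarith)
  by_cases hm : m - i < 2 * (r : ℤ)
  · exact le_trans (by exact_mod_cast hm.le) h2r
  · have : m - i ≤ 2 * r * (x - i) := by rw [not_lt] at hm; nlinarith
    calc ((m - i : ℤ) : ℝ) ≤ 2 * r * ((x - i : ℤ) : ℝ) := by exact_mod_cast this
      _ ≤ 2 * r * br (x - i) := by gcongr; exact le_max_left _ _

lemma brf_le_mul_brf {m x : ℤ} (r : ℕ) (hx : m ≤ 2 * x) : brf m r ≤ (2 * r) ^ r * brf x r := by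
  rw [brf, brf, ← card_range r, ← prod_const, card_range, ← prod_mul_distrib]
  exact prod_le_prod (fun _ _ => zero_le_one.trans (one_le_br _))
    fun i hi => br_sub_le_mul_br_sub (mem_range.mp hi) hx

lemma inv_brf_le {m x : ℤ} (r : ℕ) (hx : m ≤ 2 * x) :
    (brf x r)⁻¹ ≤ (2 * r) ^ r * (brf m r)⁻¹ := by
  rw [← div_eq_mul_inv, le_div_iff₀ (brf_pos _ _), inv_mul_le_iff₀ (brf_pos _ _), mul_comm]
  exact brf_le_mul_brf r hx

lemma sum_range_inv_brf_two (n : ℕ) :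
    ∑ p ∈ range (n + 2), (brf p 2)⁻¹ = 3 - ((n : ℝ) + 1)⁻¹ := by
  induction n with
  | zero => norm_num [sum_range_succ, brf_two, br]
  | succ n ih =>
    have h₁ : br ((n + 1 + 1 : ℕ) : ℤ) = n + 2 := by rw [br_natCast (by omega)]; push_cast; ring
    have h₂ : br ((n + 1 + 1 : ℕ) - 1 : ℤ) = n + 1 := by
      rw [← Nat.cast_pred (by omega), br_natCast (by omega)]; push_cast; ring
    rw [sum_range_succ, ih, brf_two, h₁, h₂]
    push_cast
    field_simp
    ring

lemma sum_range_inv_brf_two_le (n : ℕ) : ∑ p ∈ range n, (brf p 2)⁻¹ ≤ 3 := by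
  calc ∑ p ∈ range n, (brf p 2)⁻¹ ≤ ∑ p ∈ range (n + 2), (brf p 2)⁻¹ :=
        sum_le_sum_of_subset_of_nonneg (range_subset_range.mpr (by omega))
          fun _ _ _ => inv_brf_nonneg _ _
    _ ≤ 3 := by rw [sum_range_inv_brf_two]; linarith [inv_pos.mpr (n.cast_add_one_pos (α := ℝ))]

lemma sum_range_inv_brf_sub_two_le (m : ℕ) :
    ∑ p ∈ range (m + 1), (brf ((m : ℤ) - p) 2)⁻¹ ≤ 3 := by
  rw [← sum_range_reflect]
  refine le_of_eq_of_le (sum_congr rfl fun p hp => ?_) (sum_range_inv_brf_two_le (m + 1))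
  have : p ≤ m := Nat.lt_succ_iff.mp (mem_range.mp hp)
  push_cast [Nat.add_sub_cancel, Nat.cast_sub this]
  ring_nf

lemma inv_brf_mul_inv_brf_sub_le {r q : ℕ} (hr : 2 ≤ r) (hqr : r ≤ q) (m p : ℤ) :
    (brf p q)⁻¹ * (brf (m - p) r)⁻¹
      ≤ (2 * r) ^ r * (brf m r)⁻¹ * ((brf p 2)⁻¹ + (brf (m - p) 2)⁻¹) := by
  have hD : 0 ≤ (2 * r : ℝ) ^ r * (brf m r)⁻¹ := by have := inv_brf_nonneg m r; positivity
  rcases le_total (2 * p) m with h | h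
  · calc (brf p q)⁻¹ * (brf (m - p) r)⁻¹ ≤ (brf p 2)⁻¹ * ((2 * r) ^ r * (brf m r)⁻¹) :=
          mul_le_mul (inv_brf_anti (hr.trans hqr) p) (inv_brf_le r (by omega))
            (inv_brf_nonneg _ _) (inv_brf_nonneg _ _)
      _ ≤ _ := by rw [mul_comm]; gcongr; exact le_add_of_nonneg_right (inv_brf_nonneg _ _)
  · calc (brf p q)⁻¹ * (brf (m - p) r)⁻¹ ≤ ((2 * r) ^ r * (brf m r)⁻¹) * (brf (m - p) 2)⁻¹ :=
          mul_le_mul ((inv_brf_anti hqr p).trans (inv_brf_le r h)) (inv_brf_anti hr _)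
            (inv_brf_nonneg _ _) hD
      _ ≤ _ := by gcongr; exact le_add_of_nonneg_left (inv_brf_nonneg _ _)

/-- for all integers `q ≥ r ≥ 2` and every `m ≥ 0`,
`∑_{p=0}^m [p]_q⁻¹ [m-p]_r⁻¹ ≤ 6 (2r)^r [m]_r⁻¹`. -/
theorem sum_inv_brf_convolution_le (q r : ℕ) (hr : 2 ≤ r) (hqr : r ≤ q) (m : ℕ) :
    ∑ p ∈ Finset.range (m + 1), (brf p q)⁻¹ * (brf ((m : ℤ) - p) r)⁻¹
      ≤ 6 * (2 * r) ^ r * (brf m r)⁻¹ := by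
  calc ∑ p ∈ range (m + 1), (brf p q)⁻¹ * (brf ((m : ℤ) - p) r)⁻¹
      ≤ ∑ p ∈ range (m + 1),
          (2 * r) ^ r * (brf m r)⁻¹ * ((brf p 2)⁻¹ + (brf ((m : ℤ) - p) 2)⁻¹) :=
        sum_le_sum fun p _ => inv_brf_mul_inv_brf_sub_le hr hqr m p
    _ = (2 * r) ^ r * (brf m r)⁻¹ *
          (∑ p ∈ range (m + 1), (brf p 2)⁻¹ + ∑ p ∈ range (m + 1), (brf ((m : ℤ) - p) 2)⁻¹) := by
        rw [← mul_sum, sum_add_distrib]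
    _ ≤ (2 * r) ^ r * (brf m r)⁻¹ * (3 + 3) := by
        gcongr
        · have := inv_brf_nonneg m r; positivity
        · exact sum_range_inv_brf_two_le _
        · exact sum_range_inv_brf_sub_two_le m
    _ = 6 * (2 * r) ^ r * (brf m r)⁻¹ := by ring
end

section
/- There exists a universal constant C > 0 with the following property. Let θ > 0, let j ≥ 1 be an integer, let (U_{k,l}) be a family of nonnegative real numbers indexed by pairs of nonnegative integers, and let (W_{k,l}) be a family of nonnegative reals satisfying the j-fold Leibniz-type bound W_{k,l} ≤ ∑_{π,ρ} multinom(k;π) multinom(l;ρ) ∏_{i=1}^{j} U_{π_i,ρ_i}, where the sum is over all multi-indices π, ρ ∈ ℕ₀^j with |π| = k and |ρ| = l. Define u_{k,l} := a_{k,l}^2 θ^{k+2l} U_{k,l}^2 and w_{k,l} := a_{k,l}^2 θ^{k+2l} W_{k,l}^2. Then for every nonnegative integer N, ∑_{0 ≤ k+l ≤ N} w_{k,l} ≤ C^j ( ∑_{0 ≤ k+l ≤ N} u_{k,l} )^j. -/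
/-- The weights `a_{k,l} = 1/((k-2)!·(l-2)!)` with the convention `n! = 1` for `n ≤ 0`
(truncated subtraction in `ℕ`). -/
noncomputable def wt (k l : ℕ) : ℝ :=
  ((Nat.factorial (k - 2) : ℝ) * (Nat.factorial (l - 2) : ℝ))⁻¹

/-- Sum of `f k l` over all pairs `(k,l)` of nonnegative integers with `k + l ≤ N`. -/
noncomputable def sumUpTo (N : ℕ) (f : ℕ → ℕ → ℝ) : ℝ :=
  ∑ k ∈ Finset.range (N + 1), ∑ l ∈ Finset.range (N + 1 - k), f k l

/-!
Write `g m = (m-2)!/m!`. Multiplied by `a_{k,l}`, the Leibniz bound becomes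
`a_{k,l} W_{k,l} ≤ ∑_{π,ρ} c_k(π) c_l(ρ) ∏_i a_{π_i,ρ_i} U_{π_i,ρ_i}` with
`c_k(π) = multinom(k;π) ∏ (π_i-2)! / (k-2)! = k!/(k-2)! ∏ g(π_i)`.
Since `g n ≤ 8 g k` whenever `k ≤ 2n`, and the larger of `a, b` is at least `(a+b)/2`, the
sequence `g` is submultiplicative under convolution, `∑_{a+b=n} g a g b ≤ 48 g n`; hence
`∑_π c_k(π) ≤ 48^{j-1}`, and Cauchy–Schwarz gives `w_{k,l} ≤ 48^{4(j-1)} ∑_{π,ρ} ∏_i u_{π_i,ρ_i}`.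
Summed over the lower set `k + l ≤ N`, the tuples `((π_i, ρ_i))_i` are distinct `j`-tuples of
points of that set, so the total is at most `(∑ u)^j`.
-/

open Finset
open scoped Nat

theorem sum_antidiagonalTuple_succ {M : Type*} [AddCommMonoid M] (j n : ℕ)
    (f : (Fin (j + 1) → ℕ) → M) :
    ∑ π ∈ Nat.antidiagonalTuple (j + 1) n, f π
      = ∑ p ∈ antidiagonal n, ∑ τ ∈ Nat.antidiagonalTuple j p.2, f (Fin.cons p.1 τ) := by
  rw [sum_sigma']
  refine sum_nbij' (fun π => ⟨(π 0, ∑ i, Fin.tail π i), Fin.tail π⟩) (fun x => Fin.cons x.1.1 x.2)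
    ?_ ?_ (fun π _ => by simp) ?_ (fun π _ => by simp)
  · intro π hπ
    simp_all [Nat.mem_antidiagonalTuple, Fin.sum_univ_succ, Fin.tail]
  · rintro ⟨⟨a, b⟩, τ⟩ h
    simp_all [Nat.mem_antidiagonalTuple, Fin.sum_univ_succ]
  · rintro ⟨⟨a, b⟩, τ⟩ h
    simp_all [Nat.mem_antidiagonalTuple]

theorem sum_antidiagonalTuple_prod_le {R : Type*} [CommSemiring R] [PartialOrder R]
    [IsOrderedRing R] {f : ℕ → R} {C : R} (hf : ∀ n, 0 ≤ f n) (hC : 0 ≤ C)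
    (hconv : ∀ n, ∑ p ∈ antidiagonal n, f p.1 * f p.2 ≤ C * f n) (j n : ℕ) :
    ∑ π ∈ Nat.antidiagonalTuple (j + 1) n, ∏ i, f (π i) ≤ C ^ j * f n := by
  induction j generalizing n with
  | zero => simp
  | succ j ih =>
    calc ∑ π ∈ Nat.antidiagonalTuple (j + 2) n, ∏ i, f (π i)
        = ∑ p ∈ antidiagonal n, f p.1 * ∑ τ ∈ Nat.antidiagonalTuple (j + 1) p.2, ∏ i, f (τ i) := by
          simp [sum_antidiagonalTuple_succ, Fin.prod_univ_succ, mul_sum]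
      _ ≤ ∑ p ∈ antidiagonal n, f p.1 * (C ^ j * f p.2) := by
          gcongr with p
          exacts [hf _, ih p.2]
      _ = C ^ j * ∑ p ∈ antidiagonal n, f p.1 * f p.2 := by
          rw [mul_sum]
          exact sum_congr rfl fun p _ => by ring
      _ ≤ C ^ j * (C * f n) := by gcongr; exact hconv n
      _ = C ^ (j + 1) * f n := by ring

theorem sq_sum_sum_mul_le {α β R : Type*} [CommRing R] [LinearOrder R] [IsStrictOrderedRing R]
    {s : Finset α} {t : Finset β} {f : α → R} {g : β → R} (hf : ∀ a ∈ s, 0 ≤ f a)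
    (hg : ∀ b ∈ t, 0 ≤ g b) (x : α → β → R) :
    (∑ a ∈ s, ∑ b ∈ t, f a * g b * x a b) ^ 2
      ≤ (∑ a ∈ s, f a) ^ 2 * (∑ b ∈ t, g b) ^ 2 * ∑ a ∈ s, ∑ b ∈ t, x a b ^ 2 := by
  have hcs := sum_mul_sq_le_sq_mul_sq (s ×ˢ t) (fun p => f p.1 * g p.2) (fun p => x p.1 p.2)
  simp only [sum_product, mul_pow, ← mul_sum, ← sum_mul] at hcs
  have hfs := sum_sq_le_sq_sum_of_nonneg hf
  have hgs := sum_sq_le_sq_sum_of_nonneg hg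
  exact hcs.trans (by gcongr)

theorem sum_antidiagonalTuple_pair_eq_sum_filter {M : Type*} [AddCommMonoid M]
    {S : Finset (ℕ × ℕ)} (hS : IsLowerSet (S : Set (ℕ × ℕ))) {p : ℕ × ℕ} (hp : p ∈ S) (j : ℕ)
    (G : (Fin j → ℕ × ℕ) → M) :
    ∑ π ∈ Nat.antidiagonalTuple j p.1, ∑ ρ ∈ Nat.antidiagonalTuple j p.2, G (fun i => (π i, ρ i))
      = ∑ q ∈ Fintype.piFinset (fun _ => S) with ∑ i, q i = p, G q := by
  rw [← sum_product']
  refine sum_nbij' (fun x i => (x.1 i, x.2 i)) (fun q => (fun i => (q i).1, fun i => (q i).2))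
    ?_ ?_ (fun _ _ => rfl) (fun _ _ => rfl) (fun _ _ => rfl)
  · rintro ⟨π, ρ⟩ h
    simp only [mem_product, Nat.mem_antidiagonalTuple] at h
    have hsum : ∑ i, (π i, ρ i) = p :=
      Prod.ext (by rw [Prod.fst_sum]; exact h.1) (by rw [Prod.snd_sum]; exact h.2)
    refine mem_filter.2 ⟨Fintype.mem_piFinset.2 fun i => hS ?_ hp, hsum⟩
    exact hsum ▸ single_le_sum (f := fun i => (π i, ρ i)) (fun _ _ => zero_le) (mem_univ i)
  · intro q hq
    rw [mem_filter] at hq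
    simp [Nat.mem_antidiagonalTuple, ← Prod.fst_sum, ← Prod.snd_sum, hq.2]

theorem sum_antidiagonalTuple_pair_prod_le_sum_pow {R : Type*} [CommSemiring R]
    [PartialOrder R] [IsOrderedRing R] {S : Finset (ℕ × ℕ)} (hS : IsLowerSet (S : Set (ℕ × ℕ)))
    {F : ℕ → ℕ → R} (hF : ∀ p ∈ S, 0 ≤ F p.1 p.2) (j : ℕ) :
    ∑ p ∈ S, ∑ π ∈ Nat.antidiagonalTuple j p.1, ∑ ρ ∈ Nat.antidiagonalTuple j p.2,
        ∏ i, F (π i) (ρ i)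
      ≤ (∑ p ∈ S, F p.1 p.2) ^ j := by
  classical
  calc ∑ p ∈ S, ∑ π ∈ Nat.antidiagonalTuple j p.1, ∑ ρ ∈ Nat.antidiagonalTuple j p.2,
          ∏ i, F (π i) (ρ i)
      = ∑ p ∈ S, ∑ q ∈ Fintype.piFinset (fun _ => S) with ∑ i, q i = p, ∏ i, F (q i).1 (q i).2 :=
        sum_congr rfl fun p hp => sum_antidiagonalTuple_pair_eq_sum_filter hS hp j
          (fun q => ∏ i, F (q i).1 (q i).2)
    _ = ∑ q ∈ Fintype.piFinset (fun _ => S) with ∑ i, q i ∈ S, ∏ i, F (q i).1 (q i).2 :=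
        sum_fiberwise_eq_sum_filter _ _ _ _
    _ ≤ ∑ q ∈ Fintype.piFinset (fun _ => S), ∏ i, F (q i).1 (q i).2 :=
        sum_le_sum_of_subset_of_nonneg (filter_subset _ _) fun q hq _ =>
          prod_nonneg fun i _ => hF _ (Fintype.mem_piFinset.1 hq i)
    _ = (∑ p ∈ S, F p.1 p.2) ^ j := (sum_pow' S (fun p => F p.1 p.2) j).symm

def triangle (N : ℕ) : Finset (ℕ × ℕ) := {p ∈ range (N + 1) ×ˢ range (N + 1) | p.1 + p.2 ≤ N}

theorem isLowerSet_triangle (N : ℕ) : IsLowerSet (triangle N : Set (ℕ × ℕ)) := by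
  rintro p q ⟨h₁, h₂⟩ hp
  simp only [triangle, coe_filter, mem_product, mem_range, Set.mem_ofPred_eq] at hp ⊢
  omega

theorem sum_triangle {M : Type*} [AddCommMonoid M] (N : ℕ) (f : ℕ → ℕ → M) :
    ∑ p ∈ triangle N, f p.1 p.2 = ∑ k ∈ range (N + 1), ∑ l ∈ range (N + 1 - k), f k l := by
  rw [triangle, sum_filter, sum_product]
  refine sum_congr rfl fun k hk => ?_
  rw [← sum_filter]
  refine sum_congr ?_ fun _ _ => rfl
  ext l
  simp only [mem_filter, mem_range] at hk ⊢
  omega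

noncomputable def gevreyRatio (m : ℕ) : ℝ := ((m - 2)! : ℝ) / m !

theorem gevreyRatio_pos (m : ℕ) : 0 < gevreyRatio m := by
  unfold gevreyRatio
  positivity

theorem gevreyRatio_zero : gevreyRatio 0 = 1 := by simp [gevreyRatio]

theorem gevreyRatio_one : gevreyRatio 1 = 1 := by simp [gevreyRatio]

theorem gevreyRatio_add_two (n : ℕ) : gevreyRatio (n + 2) = 1 / ((n + 1) * (n + 2)) := by
  simp only [gevreyRatio, Nat.add_sub_cancel, Nat.factorial_succ]
  push_cast
  field_simp
  ring

theorem gevreyRatio_le_one (m : ℕ) : gevreyRatio m ≤ 1 := by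
  unfold gevreyRatio
  rw [div_le_one (by positivity)]
  exact_mod_cast Nat.factorial_le (Nat.sub_le m 2)

theorem gevreyRatio_le_of_le_two_mul {k n : ℕ} (h : k ≤ 2 * n) :
    gevreyRatio n ≤ 8 * gevreyRatio k := by
  match n, k with
  | 0, k => interval_cases k; norm_num [gevreyRatio_zero]
  | 1, k => interval_cases k <;> norm_num [gevreyRatio_zero, gevreyRatio_one, gevreyRatio_add_two]
  | n + 2, 0 => linarith [gevreyRatio_le_one (n + 2), gevreyRatio_zero]
  | n + 2, 1 => linarith [gevreyRatio_le_one (n + 2), gevreyRatio_one]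
  | n + 2, k + 2 =>
    have hk : (k : ℝ) ≤ 2 * n + 2 := by exact_mod_cast (by omega : k ≤ 2 * n + 2)
    rw [gevreyRatio_add_two, gevreyRatio_add_two, mul_one_div,
      div_le_div_iff₀ (by positivity) (by positivity)]
    nlinarith

theorem sum_range_gevreyRatio (n : ℕ) :
    ∑ m ∈ range (n + 2), gevreyRatio m = 3 - 1 / (n + 1) := by
  induction n with
  | zero => norm_num [sum_range_succ, gevreyRatio_zero, gevreyRatio_one]
  | succ n ih =>
    rw [sum_range_succ, ih, gevreyRatio_add_two]
    push_cast
    field_simp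
    ring

theorem sum_range_gevreyRatio_le (n : ℕ) : ∑ m ∈ range n, gevreyRatio m ≤ 3 := by
  calc ∑ m ∈ range n, gevreyRatio m ≤ ∑ m ∈ range (n + 2), gevreyRatio m :=
        sum_le_sum_of_subset_of_nonneg (range_mono (by omega))
          fun m _ _ => (gevreyRatio_pos m).le
    _ ≤ 3 := by rw [sum_range_gevreyRatio]; linarith [show (0 : ℝ) < 1 / (n + 1) by positivity]

theorem sum_antidiagonal_gevreyRatio_mul_le (n : ℕ) :
    ∑ p ∈ antidiagonal n, gevreyRatio p.1 * gevreyRatio p.2 ≤ 48 * gevreyRatio n := by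
  have hpair : ∀ p ∈ antidiagonal n, gevreyRatio p.1 * gevreyRatio p.2
      ≤ 8 * gevreyRatio n * (gevreyRatio p.1 + gevreyRatio p.2) := by
    intro p hp
    rw [HasAntidiagonal.mem_antidiagonal] at hp
    have h1 := (gevreyRatio_pos p.1).le
    have h2 := (gevreyRatio_pos p.2).le
    rcases le_total p.1 p.2 with h | h
    · nlinarith [gevreyRatio_le_of_le_two_mul (show n ≤ 2 * p.2 by omega)]
    · nlinarith [gevreyRatio_le_of_le_two_mul (show n ≤ 2 * p.1 by omega)]
  have hsum : ∑ p ∈ antidiagonal n, gevreyRatio p.1 ≤ 3 := by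
    rw [Nat.sum_antidiagonal_eq_sum_range_succ_mk]
    exact sum_range_gevreyRatio_le _
  calc ∑ p ∈ antidiagonal n, gevreyRatio p.1 * gevreyRatio p.2
      ≤ ∑ p ∈ antidiagonal n, 8 * gevreyRatio n * (gevreyRatio p.1 + gevreyRatio p.2) :=
        sum_le_sum hpair
    _ = 8 * gevreyRatio n * (2 * ∑ p ∈ antidiagonal n, gevreyRatio p.1) := by
        rw [← mul_sum, sum_add_distrib,
          ← Nat.sum_antidiagonal_swap (f := fun p => gevreyRatio p.2)]
        simp only [Prod.snd_swap]
        ring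
    _ ≤ 48 * gevreyRatio n := by nlinarith [gevreyRatio_pos n]

theorem sum_antidiagonalTuple_prod_gevreyRatio_le (j n : ℕ) :
    ∑ π ∈ Nat.antidiagonalTuple (j + 1) n, ∏ i, gevreyRatio (π i) ≤ 48 ^ j * gevreyRatio n :=
  sum_antidiagonalTuple_prod_le (fun m => (gevreyRatio_pos m).le) (by norm_num)
    sum_antidiagonal_gevreyRatio_mul_le j n

noncomputable def gevreyMultinomial {j : ℕ} (k : ℕ) (π : Fin j → ℕ) : ℝ :=
  Nat.multinomial univ π * (∏ i, ((π i - 2)! : ℝ)) / (k - 2)!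

theorem gevreyMultinomial_nonneg {j : ℕ} (k : ℕ) (π : Fin j → ℕ) : 0 ≤ gevreyMultinomial k π := by
  unfold gevreyMultinomial
  positivity

theorem gevreyMultinomial_eq {j k : ℕ} {π : Fin j → ℕ} (hπ : ∑ i, π i = k) :
    gevreyMultinomial k π = (k ! / (k - 2)! : ℝ) * ∏ i, gevreyRatio (π i) := by
  have hspec : ((∏ i, (π i)! : ℕ) : ℝ) * Nat.multinomial univ π = k ! := by
    exact_mod_cast hπ ▸ Nat.multinomial_spec univ π
  simp only [gevreyMultinomial, gevreyRatio, prod_div_distrib]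
  rw [← hspec]
  push_cast
  field_simp

theorem sum_gevreyMultinomial_le (j k : ℕ) :
    ∑ π ∈ Nat.antidiagonalTuple (j + 1) k, gevreyMultinomial k π ≤ 48 ^ j := by
  have hk : (k ! / (k - 2)! : ℝ) * gevreyRatio k = 1 := by
    simp only [gevreyRatio]
    field_simp
  calc ∑ π ∈ Nat.antidiagonalTuple (j + 1) k, gevreyMultinomial k π
      = (k ! / (k - 2)! : ℝ) * ∑ π ∈ Nat.antidiagonalTuple (j + 1) k, ∏ i, gevreyRatio (π i) := by
        rw [mul_sum]
        exact sum_congr rfl fun π hπ => gevreyMultinomial_eq (Nat.mem_antidiagonalTuple.mp hπ)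
    _ ≤ (k ! / (k - 2)! : ℝ) * (48 ^ j * gevreyRatio k) := by
        gcongr
        exact sum_antidiagonalTuple_prod_gevreyRatio_le j k
    _ = 48 ^ j := by rw [mul_left_comm, hk, mul_one]

theorem wt_nonneg (k l : ℕ) : 0 ≤ wt k l := by
  unfold wt
  positivity

theorem wt_mul_multinomial_mul_multinomial {j : ℕ} (k l : ℕ) (π ρ : Fin j → ℕ) :
    wt k l * Nat.multinomial univ π * Nat.multinomial univ ρ
      = gevreyMultinomial k π * gevreyMultinomial l ρ * ∏ i, wt (π i) (ρ i) := by
  simp only [wt, gevreyMultinomial, mul_inv, prod_mul_distrib, prod_inv_distrib]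
  field_simp

noncomputable def weightedSq (θ : ℝ) (U : ℕ → ℕ → ℝ) (k l : ℕ) : ℝ :=
  wt k l ^ 2 * θ ^ (k + 2 * l) * U k l ^ 2

theorem pow_mul_sq_prod_eq_prod_weightedSq {j k l : ℕ} {π ρ : Fin j → ℕ} (hπ : ∑ i, π i = k)
    (hρ : ∑ i, ρ i = l) (θ : ℝ) (U : ℕ → ℕ → ℝ) :
    θ ^ (k + 2 * l) * (∏ i, wt (π i) (ρ i) * U (π i) (ρ i)) ^ 2
      = ∏ i, weightedSq θ U (π i) (ρ i) := by
  rw [← hπ, ← hρ, mul_sum, ← sum_add_distrib, ← prod_pow_eq_pow_sum, ← prod_pow,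
    ← prod_mul_distrib]
  exact prod_congr rfl fun i _ => by rw [weightedSq]; ring

theorem wt_mul_le_sum_gevreyMultinomial {U W : ℕ → ℕ → ℝ} {j k l : ℕ}
    (hWU : W k l ≤ ∑ π ∈ Nat.antidiagonalTuple j k, ∑ ρ ∈ Nat.antidiagonalTuple j l,
      (Nat.multinomial univ π : ℝ) * (Nat.multinomial univ ρ : ℝ) * ∏ i, U (π i) (ρ i)) :
    wt k l * W k l ≤ ∑ π ∈ Nat.antidiagonalTuple j k, ∑ ρ ∈ Nat.antidiagonalTuple j l,
      gevreyMultinomial k π * gevreyMultinomial l ρ * ∏ i, wt (π i) (ρ i) * U (π i) (ρ i) := by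
  refine (mul_le_mul_of_nonneg_left hWU (wt_nonneg k l)).trans_eq ?_
  simp only [mul_sum, prod_mul_distrib, ← mul_assoc, wt_mul_multinomial_mul_multinomial]

theorem weightedSq_le_of_le_sum {θ : ℝ} (hθ : 0 ≤ θ) {U W : ℕ → ℕ → ℝ} {j k l : ℕ}
    (hW : 0 ≤ W k l)
    (hWU : W k l ≤ ∑ π ∈ Nat.antidiagonalTuple (j + 1) k, ∑ ρ ∈ Nat.antidiagonalTuple (j + 1) l,
      (Nat.multinomial univ π : ℝ) * (Nat.multinomial univ ρ : ℝ) * ∏ i, U (π i) (ρ i)) :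
    weightedSq θ W k l ≤ 48 ^ (4 * j) * ∑ π ∈ Nat.antidiagonalTuple (j + 1) k,
      ∑ ρ ∈ Nat.antidiagonalTuple (j + 1) l, ∏ i, weightedSq θ U (π i) (ρ i) := by
  have hcs := (pow_le_pow_left₀ (mul_nonneg (wt_nonneg k l) hW)
    (wt_mul_le_sum_gevreyMultinomial hWU) 2).trans
    (sq_sum_sum_mul_le (fun π _ => gevreyMultinomial_nonneg k π)
      (fun ρ _ => gevreyMultinomial_nonneg l ρ) _)
  have hc : (∑ π ∈ Nat.antidiagonalTuple (j + 1) k, gevreyMultinomial k π) ^ 2 *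
      (∑ ρ ∈ Nat.antidiagonalTuple (j + 1) l, gevreyMultinomial l ρ) ^ 2 ≤ (48 : ℝ) ^ (4 * j) := by
    have hk₀ := sum_nonneg fun π (_ : π ∈ Nat.antidiagonalTuple (j + 1) k) =>
      gevreyMultinomial_nonneg k π
    have hl₀ := sum_nonneg fun ρ (_ : ρ ∈ Nat.antidiagonalTuple (j + 1) l) =>
      gevreyMultinomial_nonneg l ρ
    rw [show 4 * j = j * 2 + j * 2 by ring, pow_add, pow_mul]
    exact mul_le_mul (pow_le_pow_left₀ hk₀ (sum_gevreyMultinomial_le j k) 2)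
      (pow_le_pow_left₀ hl₀ (sum_gevreyMultinomial_le j l) 2) (by positivity) (by positivity)
  calc weightedSq θ W k l = θ ^ (k + 2 * l) * (wt k l * W k l) ^ 2 := by rw [weightedSq]; ring
    _ ≤ θ ^ (k + 2 * l) * (48 ^ (4 * j) *
          ∑ π ∈ Nat.antidiagonalTuple (j + 1) k, ∑ ρ ∈ Nat.antidiagonalTuple (j + 1) l,
            (∏ i, wt (π i) (ρ i) * U (π i) (ρ i)) ^ 2) := by
        gcongr
        exact hcs.trans (by gcongr)
    _ = _ := by
        rw [mul_left_comm, mul_sum]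
        congr 1
        refine sum_congr rfl fun π hπ => ?_
        rw [mul_sum]
        exact sum_congr rfl fun ρ hρ => pow_mul_sq_prod_eq_prod_weightedSq
          (Nat.mem_antidiagonalTuple.mp hπ) (Nat.mem_antidiagonalTuple.mp hρ) θ U

/-- the Remark following Lemma 2 of the paper: there is a universal constant
`C > 0` such that whenever `θ > 0`, `j ≥ 1`, and `(U_{k,l})`, `(W_{k,l})` are families of
nonnegative reals satisfying the `j`-fold Leibniz-type bound
`W_{k,l} ≤ ∑_{|π|=k, |ρ|=l} multinom(k;π) multinom(l;ρ) ∏_{i=1}^j U_{π_i,ρ_i}`,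
then, with `u_{k,l} = a_{k,l}^2 θ^{k+2l} U_{k,l}^2` and
`w_{k,l} = a_{k,l}^2 θ^{k+2l} W_{k,l}^2`, one has
`∑_{k+l ≤ N} w_{k,l} ≤ C^j (∑_{k+l ≤ N} u_{k,l})^j` for every `N`. -/
theorem weighted_sum_power_estimate :
    ∃ C : ℝ, 0 < C ∧ ∀ (θ : ℝ), 0 < θ → ∀ (j : ℕ), 1 ≤ j → ∀ (U W : ℕ → ℕ → ℝ),
      (∀ k l, 0 ≤ U k l) → (∀ k l, 0 ≤ W k l) →
      (∀ k l, W k l ≤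
          ∑ π ∈ Finset.Nat.antidiagonalTuple j k,
            ∑ ρ ∈ Finset.Nat.antidiagonalTuple j l,
              (Nat.multinomial Finset.univ π : ℝ) * (Nat.multinomial Finset.univ ρ : ℝ) *
                ∏ i : Fin j, U (π i) (ρ i)) →
      ∀ N : ℕ,
        sumUpTo N (fun k l => wt k l ^ 2 * θ ^ (k + 2 * l) * W k l ^ 2)
          ≤ C ^ j * sumUpTo N (fun k l => wt k l ^ 2 * θ ^ (k + 2 * l) * U k l ^ 2) ^ j := by
  refine ⟨48 ^ 4, by norm_num, fun θ hθ j hj U W _ hW hWU N => ?_⟩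
  obtain ⟨j, rfl⟩ := Nat.exists_eq_add_of_le' hj
  have hu : ∀ p ∈ triangle N, 0 ≤ weightedSq θ U p.1 p.2 := fun p _ => by
    unfold weightedSq
    positivity
  change sumUpTo N (weightedSq θ W) ≤ _ * sumUpTo N (weightedSq θ U) ^ _
  simp only [sumUpTo, ← sum_triangle]
  calc ∑ p ∈ triangle N, weightedSq θ W p.1 p.2
      ≤ ∑ p ∈ triangle N, 48 ^ (4 * j) * ∑ π ∈ Nat.antidiagonalTuple (j + 1) p.1,
          ∑ ρ ∈ Nat.antidiagonalTuple (j + 1) p.2, ∏ i, weightedSq θ U (π i) (ρ i) :=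
        sum_le_sum fun p _ => weightedSq_le_of_le_sum hθ.le (hW _ _) (hWU _ _)
    _ ≤ 48 ^ (4 * j) * (∑ p ∈ triangle N, weightedSq θ U p.1 p.2) ^ (j + 1) := by
        rw [← mul_sum]
        gcongr
        exact sum_antidiagonalTuple_pair_prod_le_sum_pow (isLowerSet_triangle N) hu (j + 1)
    _ ≤ (48 ^ 4) ^ (j + 1) * (∑ p ∈ triangle N, weightedSq θ U p.1 p.2) ^ (j + 1) := by
        have := sum_nonneg hu
        rw [← pow_mul]
        gcongr
        · norm_num
        · omega
end
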